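/- Let κ, θ, σ > 0 and h := √(κ² + 2σ²). Fix s ∈ ℝ and define, for t ≥ s, B̃(t) := 2(e^{h(t−s)} − 1)/(2h + (κ+h)(e^{h(t−s)} − 1)) and Ã(t) := [2h·e^{(κ+h)(t−s)/2}/(2h + (κ+h)(e^{h(t−s)} − 1))]^{2κθ/σ²}. Then Ã(s) = 1, Ã(t) > 0 for all t ≥ s, and (log Ã)'(t) = −κθ·B̃(t) for all t ≥ s. -/

import Mathlib

/-- In the CIR model, the affine function
`Ã(t) = [2h·e^{(κ+h)(t−s)/2}/(2h + (κ+h)(e^{h(t−s)} − 1))]^{2κθ/σ²}` with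
`h = √(κ² + 2σ²)` satisfies `Ã(s) = 1`, `Ã(t) > 0`, and
`(log Ã)'(t) = −κθ·B̃(t)` for `t ≥ s`. -/
theorem cir_ode_A
    (κ θ σ : ℝ) (hκ : 0 < κ) (hθ : 0 < θ) (hσ : 0 < σ)
    (h : ℝ) (hh : h = Real.sqrt (κ ^ 2 + 2 * σ ^ 2))
    (s : ℝ) (B A : ℝ → ℝ)
    (hB : B = fun t => 2 * (Real.exp (h * (t - s)) - 1) /
      (2 * h + (κ + h) * (Real.exp (h * (t - s)) - 1)))
    (hA : A = fun t =>
      (2 * h * Real.exp ((κ + h) * (t - s) / 2) /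
        (2 * h + (κ + h) * (Real.exp (h * (t - s)) - 1))) ^ (2 * κ * θ / σ ^ 2 : ℝ)) :
    A s = 1 ∧ (∀ t, s ≤ t → 0 < A t) ∧
      ∀ t, s ≤ t → deriv (fun u => Real.log (A u)) t = -(κ * θ) * B t := by
  have hσ2 : (0:ℝ) < σ ^ 2 := by positivity
  have hsq : h ^ 2 = κ ^ 2 + 2 * σ ^ 2 := by
    rw [hh, Real.sq_sqrt]; positivity
  have hh0 : 0 < h := by
    rw [hh]; exact Real.sqrt_pos.mpr (by positivity)
  have hκh : κ < h := by nlinarith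
  set c := (2 * κ * θ / σ ^ 2 : ℝ) with hc
  have hD : ∀ u : ℝ, 0 < 2 * h + (κ + h) * (Real.exp (h * (u - s)) - 1) := by
    intro u
    nlinarith [Real.exp_pos (h * (u - s)),
      mul_pos (show (0:ℝ) < κ + h by linarith) (Real.exp_pos (h * (u - s)))]
  have hApos : ∀ u : ℝ, 0 < A u := by
    intro u
    rw [hA]
    exact Real.rpow_pos_of_pos (div_pos (by positivity) (hD u)) _
  refine ⟨?_, fun t _ => hApos t, ?_⟩
  · rw [hA]
    have h2h : (2:ℝ) * h ≠ 0 := by positivity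
    norm_num [div_self h2h, Real.one_rpow]
  · intro t ht
    have hlog : (fun u => Real.log (A u)) = fun u =>
        c * (Real.log (2 * h) + (κ + h) * (u - s) / 2
          - Real.log (2 * h + (κ + h) * (Real.exp (h * (u - s)) - 1))) := by
      funext u
      rw [hA]
      rw [Real.log_rpow (div_pos (by positivity) (hD u))]
      rw [Real.log_div (by positivity) (ne_of_gt (hD u))]
      rw [Real.log_mul (by positivity) (Real.exp_ne_zero _), Real.log_exp]
    rw [hlog]
    have hE := Real.exp_pos (h * (t - s))
    set E := Real.exp (h * (t - s)) with hEdef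
    have hD' : HasDerivAt (fun u => 2 * h + (κ + h) * (Real.exp (h * (u - s)) - 1))
        ((κ + h) * (E * h)) t := by
      have h1 : HasDerivAt (fun u : ℝ => h * (u - s)) h t := by
        simpa using ((hasDerivAt_id t).sub_const s).const_mul h
      have h2 : HasDerivAt (fun u => Real.exp (h * (u - s))) (E * h) t := h1.exp
      simpa using ((h2.sub_const 1).const_mul (κ + h)).const_add (2 * h)
    have hlogD : HasDerivAt
        (fun u => Real.log (2 * h + (κ + h) * (Real.exp (h * (u - s)) - 1)))
        ((κ + h) * (E * h) / (2 * h + (κ + h) * (E - 1))) t :=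
      hD'.log (ne_of_gt (hD t))
    have hlin : HasDerivAt (fun u : ℝ => Real.log (2 * h) + (κ + h) * (u - s) / 2)
        ((κ + h) / 2) t := by
      have h3 : HasDerivAt (fun u : ℝ => (κ + h) * (u - s) / 2) ((κ + h) / 2) t := by
        simpa using (((hasDerivAt_id t).sub_const s).const_mul (κ + h)).div_const 2
      simpa using h3.const_add (Real.log (2 * h))
    have hfull : HasDerivAt (fun u =>
        c * (Real.log (2 * h) + (κ + h) * (u - s) / 2
          - Real.log (2 * h + (κ + h) * (Real.exp (h * (u - s)) - 1))))
        (c * ((κ + h) / 2 - (κ + h) * (E * h) / (2 * h + (κ + h) * (E - 1)))) t :=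
      (hlin.sub hlogD).const_mul c
    rw [hfull.deriv, hB]
    have hDt : (2 * h + (κ + h) * (E - 1)) ≠ 0 := ne_of_gt (hD t)
    rw [hc]
    simp only [← hEdef]
    field_simp
    linear_combination (1 - E) * hsq
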